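/- arXiv:2111.00247 — 3 statements merged into one kernel-verified Lean document; each statement's English description precedes it below -/
import Mathlib

section
/- Overestimate property of IEU for I-extension: let S = α ⊕ i be obtained from sequence α by appending item i to its last itemset. Then for any q-sequence Q containing S, u(S,Q) ≤ IEU(S,Q), where IEU(S,Q) = max over ending positions p of α in Q with i in the p-th q-itemset of (u(α,p,Q) + u(i,p,Q) + ru(Q/(i,p))). -/
open scoped Classical

/-- A sequence: a finite list of itemsets (finite sets of items). -/
abbrev PatSeq := List (Finset ℕ)

/-- `S` is a contiguous sub-sequence of `S'`: there is a contiguous block `T`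
of `S'` such that each itemset of `S` is a subset of the corresponding itemset of `T`. -/
def CSub (S S' : PatSeq) : Prop :=
  ∃ T : PatSeq, List.Forall₂ (· ⊆ ·) S T ∧ T <:+: S'

/-- `Q` has an instance of `S` at ending position `p`
(0-indexed index of the last itemset of the instance). -/
def Inst (Q S : PatSeq) (p : ℕ) : Prop :=
  S.length ≤ p + 1 ∧ p < Q.length ∧
    ∀ j < S.length, S.getD j ∅ ⊆ Q.getD (p + 1 - S.length + j) ∅

/-- `Q` contains `S`: it has at least one instance of `S`. -/
def Contains (Q S : PatSeq) : Prop := ∃ p, Inst Q S p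

/-- Utility of the instance of `S` ending at position `p`, where `w j i` is the
(nonnegative) utility of item `i` in the `j`-th q-itemset. -/
def instUtil (w : ℕ → ℕ → ℕ) (S : PatSeq) (p : ℕ) : ℕ :=
  ∑ j ∈ Finset.range S.length, ∑ i ∈ S.getD j ∅, w (p + 1 - S.length + j) i

/-- Total utility of the q-sequence `Q`. -/
def qUtil (w : ℕ → ℕ → ℕ) (Q : PatSeq) : ℕ :=
  ∑ j ∈ Finset.range Q.length, ∑ i ∈ Q.getD j ∅, w j i

/-- Utility of `S` in `Q`: the maximum instance utility over all ending positions. -/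
noncomputable def seqUtil (w : ℕ → ℕ → ℕ) (Q S : PatSeq) : ℕ :=
  ((Finset.range Q.length).filter (fun p => Inst Q S p)).sup (fun p => instUtil w S p)

/-- I-extension: append item `i` to the last itemset of `α`. -/
def IExt (α : PatSeq) (i : ℕ) : PatSeq := α.dropLast ++ [insert i (α.getLastD ∅)]

/-- S-extension: append the new itemset `{i}` to `α`. -/
def SExt (α : PatSeq) (i : ℕ) : PatSeq := α ++ [({i} : Finset ℕ)]

/-- Remaining utility of `Q` after the occurrence of item `i` in the `p`-th itemset:
utilities of items after `i` in the `p`-th itemset plus all later itemsets. -/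
def ru (w : ℕ → ℕ → ℕ) (Q : PatSeq) (i p : ℕ) : ℕ :=
  (∑ x ∈ (Q.getD p ∅).filter (fun x => i < x), w p x)
    + ∑ j ∈ Finset.Ico (p + 1) Q.length, ∑ x ∈ Q.getD j ∅, w j x

/-- IEU of the I-extension `α ⊕ i` in `Q`. -/
noncomputable def IEUI (w : ℕ → ℕ → ℕ) (Q α : PatSeq) (i : ℕ) : ℕ :=
  ((Finset.range Q.length).filter (fun p => Inst Q α p ∧ i ∈ Q.getD p ∅)).sup
    (fun p => instUtil w α p + w p i + ru w Q i p)


lemma getLastD_eq_getD' (α : List (Finset ℕ)) (h : α ≠ []) :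
    α.getLastD ∅ = α.getD (α.length - 1) ∅ := by
  have hl := List.length_pos_iff.mpr h
  rw [List.getD_eq_getElem _ _ (by omega), List.getLastD_eq_getLast?, List.getLast?_eq_getElem?,
    List.getElem?_eq_getElem (by omega)]
  rfl

lemma iext_getD_lt' (α : List (Finset ℕ)) (i : ℕ) (j : ℕ) (hj : j < α.length - 1) :
    (α.dropLast ++ [insert i (α.getLastD ∅)]).getD j ∅ = α.getD j ∅ := by
  rw [List.getD_append _ _ _ _ (by simp [List.length_dropLast]; omega),
    List.getD_eq_getElem _ _ (by simp [List.length_dropLast]; omega),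
    List.getD_eq_getElem _ _ (by omega), List.getElem_dropLast]

lemma iext_getD_last' (α : List (Finset ℕ)) (i : ℕ) :
    (α.dropLast ++ [insert i (α.getLastD ∅)]).getD (α.length - 1) ∅
      = insert i (α.getLastD ∅) := by
  rw [List.getD_append_right _ _ _ _ (by simp [List.length_dropLast])]
  simp [List.length_dropLast]

lemma iext_length' (α : List (Finset ℕ)) (i : ℕ) (h : α ≠ []) :
    (α.dropLast ++ [insert i (α.getLastD ∅)]).length = α.length := by
  have := List.length_pos_iff.mpr h
  simp [List.length_dropLast]; omega

/-- Overestimate property of IEU for I-extension. -/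
theorem ieu_overestimate_iext (w : ℕ → ℕ → ℕ) (Q α : PatSeq) (i : ℕ)
    (hα : α ≠ []) (hi : i ∉ α.getLastD ∅) (hc : Contains Q (IExt α i)) :
    seqUtil w Q (IExt α i) ≤ IEUI w Q α i := by
  apply Finset.sup_le
  intro p hp
  simp only [Finset.mem_filter, Finset.mem_range] at hp
  obtain ⟨hpQ, hinst⟩ := hp
  have hL := iext_length' α i hα
  have hl := List.length_pos_iff.mpr hα
  obtain ⟨h1, h2, h3⟩ := hinst
  unfold IExt at hL h3 h1 ⊢
  rw [hL] at h1 h3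
  have hidx : p + 1 - α.length + (α.length - 1) = p := by omega
  have hlast := h3 (α.length - 1) (by omega)
  rw [iext_getD_last', hidx] at hlast
  have hiQ : i ∈ Q.getD p ∅ := hlast (Finset.mem_insert_self _ _)
  have hInstα : Inst Q α p := by
    refine ⟨by omega, hpQ, ?_⟩
    intro j hj
    rcases lt_or_ge j (α.length - 1) with h | h
    · have := h3 j (by omega)
      rwa [iext_getD_lt' _ _ _ h] at this
    · have hj' : j = α.length - 1 := by omega
      subst hj'
      rw [hidx, ← getLastD_eq_getD' _ hα]
      exact fun x hx => hlast (Finset.mem_insert_of_mem hx)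
  have hmem : p ∈ (Finset.range Q.length).filter
      (fun p => Inst Q α p ∧ i ∈ Q.getD p ∅) :=
    Finset.mem_filter.mpr ⟨Finset.mem_range.mpr hpQ, hInstα, hiQ⟩
  refine le_trans ?_ (Finset.le_sup hmem)
  have hsplit : α.length = (α.length - 1) + 1 := by omega
  have hval : instUtil w (α.dropLast ++ [insert i (α.getLastD ∅)]) p
      = instUtil w α p + w p i := by
    unfold instUtil
    rw [hL]
    have heq : ∀ j ∈ Finset.range (α.length - 1),
        (∑ x ∈ (α.dropLast ++ [insert i (α.getLastD ∅)]).getD j ∅,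
          w (p + 1 - α.length + j) x) = ∑ x ∈ α.getD j ∅, w (p + 1 - α.length + j) x := by
      intro j hj
      rw [iext_getD_lt' _ _ _ (Finset.mem_range.mp hj)]
    rw [hsplit, Finset.sum_range_succ, Finset.sum_range_succ, ← hsplit,
      iext_getD_last', hidx, Finset.sum_insert hi, ← getLastD_eq_getD' _ hα,
      Finset.sum_congr rfl heq]
    ring
  rw [hval]
  omega
end

section
/- Overestimate property of IEU for S-extension: let S = α ⊗ i be obtained from sequence α by appending a new itemset {i}. Then for any q-sequence Q containing S, u(S,Q) ≤ IEU(S,Q), where IEU(S,Q) = max over ending positions p of α in Q with i in the (p+1)-th q-itemset of (u(α,p,Q) + u(i,p+1,Q) + ru(Q/(i,p+1))). -/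
open scoped Classical

/-- IEU of the S-extension `α ⊗ i` in `Q`. -/
noncomputable def IEUS (w : ℕ → ℕ → ℕ) (Q α : PatSeq) (i : ℕ) : ℕ :=
  ((Finset.range Q.length).filter
      (fun p => Inst Q α p ∧ i ∈ Q.getD (p + 1) ∅)).sup
    (fun p => instUtil w α p + w (p + 1) i + ru w Q i (p + 1))


theorem List.getD_append_singleton_length {β : Type*} (l : List β) (a d : β) :
    (l ++ [a]).getD l.length d = a := by
  simp [List.getD]

theorem Inst.of_append_singleton {Q α : PatSeq} {s : Finset ℕ} {p : ℕ}
    (h : Inst Q (α ++ [s]) (p + 1)) : Inst Q α p ∧ s ⊆ Q.getD (p + 1) ∅ := by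
  obtain ⟨hlen, hpQ, hsub⟩ := h
  simp only [List.length_append, List.length_singleton] at hlen hsub
  refine ⟨⟨by omega, by omega, fun j hj => ?_⟩, ?_⟩
  · have := hsub j (by omega)
    rwa [List.getD_append _ _ _ _ hj, Nat.add_sub_add_right] at this
  · have := hsub α.length (by omega)
    rwa [List.getD_append_singleton_length, Nat.add_sub_add_right,
      Nat.sub_add_cancel (by omega)] at this

theorem Inst.pos_of_append_singleton {Q α : PatSeq} {s : Finset ℕ} {p : ℕ} (hα : α ≠ [])
    (h : Inst Q (α ++ [s]) p) : 0 < p := by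
  have hlen := h.1
  have hα' := List.length_pos_iff.mpr hα
  simp only [List.length_append, List.length_singleton] at hlen
  omega

theorem instUtil_append_singleton (w : ℕ → ℕ → ℕ) {α : PatSeq} (s : Finset ℕ) {p : ℕ}
    (hp : α.length ≤ p + 1) :
    instUtil w (α ++ [s]) (p + 1) = instUtil w α p + ∑ x ∈ s, w (p + 1) x := by
  unfold instUtil
  rw [List.length_append, List.length_singleton, Finset.sum_range_succ,
    List.getD_append_singleton_length, Nat.add_sub_add_right, Nat.sub_add_cancel hp]
  congr 1
  refine Finset.sum_congr rfl fun j hj => ?_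
  rw [List.getD_append _ _ _ _ (Finset.mem_range.mp hj)]

theorem ieu_overestimate_sext_general (w : ℕ → ℕ → ℕ) (Q α : PatSeq) (i : ℕ)
    (hα : α ≠ []) :
    seqUtil w Q (SExt α i) ≤ IEUS w Q α i := by
  refine Finset.sup_le fun p hp => ?_
  obtain ⟨hpQ, hinst⟩ := Finset.mem_filter.mp hp
  obtain ⟨q, rfl⟩ := Nat.exists_eq_add_one_of_ne_zero
    (Inst.pos_of_append_singleton hα hinst).ne'
  obtain ⟨hinstα, hi⟩ := Inst.of_append_singleton hinst
  have hq : q ∈ (Finset.range Q.length).filter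
      (fun p => Inst Q α p ∧ i ∈ Q.getD (p + 1) ∅) :=
    Finset.mem_filter.mpr ⟨by simp only [Finset.mem_range] at hpQ ⊢; omega,
      hinstα, Finset.singleton_subset_iff.mp hi⟩
  calc instUtil w (SExt α i) (q + 1)
      = instUtil w α q + w (q + 1) i := by
        rw [SExt, instUtil_append_singleton w _ hinstα.1, Finset.sum_singleton]
    _ ≤ instUtil w α q + w (q + 1) i + ru w Q i (q + 1) := Nat.le_add_right _ _
    _ ≤ IEUS w Q α i :=
        Finset.le_sup (f := fun p => instUtil w α p + w (p + 1) i + ru w Q i (p + 1)) hq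

/-- Overestimate property of IEU for S-extension. -/
theorem ieu_overestimate_sext (w : ℕ → ℕ → ℕ) (Q α : PatSeq) (i : ℕ)
    (hα : α ≠ []) (hc : Contains Q (SExt α i)) :
    seqUtil w Q (SExt α i) ≤ IEUS w Q α i :=
  ieu_overestimate_sext_general w Q α i hα
end

section
/- Ending position characterization: for sequences α and its S-extension S = α⊗i, the set of ending positions satisfies EP(S,Q) ⊆ {p+1 : p ∈ EP(α,Q) and i is in the (p+1)-th q-itemset of Q}, with equality when α is nonempty. -/
open scoped Classical

/-- `Q` has an instance of `S` at (1-indexed) ending position `p`: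
the itemsets of `S` occupy the positions `p - |S| + 1, …, p` of `Q`. -/
def Inst1 (Q S : PatSeq) (p : ℕ) : Prop :=
  S.length ≤ p ∧ p ≤ Q.length ∧
    ∀ j < S.length, S.getD j ∅ ⊆ Q.getD (p - S.length + j) ∅

/-- The set of ending positions of instances of `S` in `Q`. -/
def EP (Q S : PatSeq) : Set ℕ := {p | Inst1 Q S p}

lemma inst1_sext_iff (Q α : PatSeq) (i : ℕ) (q : ℕ) :
    Inst1 Q (SExt α i) q ↔ ∃ p, Inst1 Q α p ∧ q = p + 1 ∧ i ∈ Q.getD p ∅ := by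
  unfold Inst1 SExt
  simp only [List.length_append, List.length_cons, List.length_nil]
  constructor
  · rintro ⟨h1, h2, h3⟩
    refine ⟨q - 1, ⟨by omega, by omega, ?_⟩, by omega, ?_⟩
    · intro j hj
      have := h3 j (by omega)
      rwa [List.getD_append _ _ _ _ hj, show q - (α.length + 1) + j = q - 1 - α.length + j by omega] at this
    · have := h3 α.length (by omega)
      rw [show q - (α.length + 1) + α.length = q - 1 by omega] at this
      have heq : (α ++ [({i} : Finset ℕ)]).getD α.length ∅ = {i} := by
        simp [List.getD_eq_getElem?_getD]
      rw [heq] at this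
      exact this (Finset.mem_singleton_self i)
  · rintro ⟨p, ⟨h1, h2, h3⟩, rfl, hi⟩
    have hp : p < Q.length := by
      by_contra h
      rw [List.getD_eq_default _ _ (by omega)] at hi
      exact absurd hi (Finset.notMem_empty i)
    refine ⟨by omega, by omega, ?_⟩
    intro j hj
    rw [show p + 1 - (α.length + 1) + j = p - α.length + j by omega]
    rcases Nat.lt_or_ge j α.length with h | h
    · rw [List.getD_append _ _ _ _ h]
      exact h3 j h
    · have hj' : j = α.length := by omega
      subst hj'
      have heq : (α ++ [({i} : Finset ℕ)]).getD α.length ∅ = {i} := by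
        simp [List.getD_eq_getElem?_getD]
      rw [heq, show p - α.length + α.length = p by omega]
      simpa using hi

/-- Ending-position characterization for S-extensions:
`EP(α ⊗ i, Q) ⊆ {p+1 : p ∈ EP(α,Q), i ∈ (p+1)-th itemset of Q}`, with equality
when `α` is nonempty.  (The `(p+1)`-th itemset of `Q` is `Q.getD p ∅` in
0-indexed access.) -/
theorem ep_sext (Q α : PatSeq) (i : ℕ) :
    EP Q (SExt α i) ⊆ {q | ∃ p ∈ EP Q α, q = p + 1 ∧ i ∈ Q.getD p ∅} ∧
      (α ≠ [] →
        EP Q (SExt α i) = {q | ∃ p ∈ EP Q α, q = p + 1 ∧ i ∈ Q.getD p ∅}) := by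
  constructor
  · rintro q hq
    exact (inst1_sext_iff Q α i q).mp hq
  · intro _
    ext q
    exact inst1_sext_iff Q α i q
end
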